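/- arXiv:2507.20068 — 3 statements merged into one kernel-verified Lean document; each statement's English description precedes it below -/
import Mathlib

section
/- Let S and A be finite types, H ≥ 1 a horizon, d₀ an initial state distribution on S, P : S × A → (S → ℝ) transition probability mass functions, r : S × A → ℝ a reward function, and γ ∈ ℝ a discount factor. Let π_b, π_e be policies (probability mass functions over A for each state) satisfying common support: π_e(a|s) > 0 implies π_b(a|s) > 0. With the trajectory distribution p^π(τ) = d₀(s₁)·∏_{t=1}^{H} π(a_t|s_t)·∏_{t=1}^{H−1} P(s_{t+1}|s_t,a_t), the per-decision importance-sampling estimator satisfies ∑_τ p^{π_b}(τ)·[∑_{t=1}^{H} γ^{t−1}·(∏_{k=1}^{t} π_e(a_k|s_k)/π_b(a_k|s_k))·r(s_t,a_t)] = ∑_τ p^{π_e}(τ)·∑_{t=1}^{H} γ^{t−1} r(s_t,a_t) = V^{π_e}. -/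
/-- A trajectory of horizon `H` is a pair of state and action sequences. -/
abbrev Traj (S A : Type*) (H : ℕ) := (Fin H → S) × (Fin H → A)

/-- The probability of the trajectory `τ` in a finite-horizon MDP with initial state
distribution `d0`, transition dynamics `P` and policy `π`:
`p^π(τ) = d0(s₁) · ∏_{t=1}^H π(a_t|s_t) · ∏_{t=1}^{H−1} P(s_{t+1}|s_t,a_t)`. -/
def trajProb {S A : Type*} {H : ℕ} (hH : 0 < H)
    (d0 : S → ℝ) (P : S → A → S → ℝ) (π : S → A → ℝ) (τ : Traj S A H) : ℝ :=
  d0 (τ.1 ⟨0, hH⟩) * (∏ t : Fin H, π (τ.1 t) (τ.2 t)) *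
    ∏ t : Fin (H - 1),
      P (τ.1 ⟨t.val, Nat.lt_of_lt_of_le t.isLt (Nat.sub_le H 1)⟩)
        (τ.2 ⟨t.val, Nat.lt_of_lt_of_le t.isLt (Nat.sub_le H 1)⟩)
        (τ.1 ⟨t.val + 1, Nat.lt_of_le_of_lt (Nat.succ_le_of_lt t.isLt)
          (Nat.sub_lt hH Nat.one_pos)⟩)

/-- The per-decision importance-sampling (PDIS) weighted return
`R̃_PDIS(τ) = ∑_{t=1}^H γ^{t−1} (∏_{k=1}^t πe(a_k|s_k)/πb(a_k|s_k)) r(s_t,a_t)`. -/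
noncomputable def pdisReturn {S A : Type*} {H : ℕ}
    (πb πe : S → A → ℝ) (r : S → A → ℝ) (γ : ℝ) (τ : Traj S A H) : ℝ :=
  ∑ t : Fin H, γ ^ (t : ℕ) *
    (∏ k ∈ Finset.univ.filter (fun k : Fin H => k ≤ t),
      πe (τ.1 k) (τ.2 k) / πb (τ.1 k) (τ.2 k)) * r (τ.1 t) (τ.2 t)

def genProb {S A : Type*} {H : ℕ} (hH : 0 < H)
    (d0 : S → ℝ) (P : S → A → S → ℝ) (sch : ℕ → S → A → ℝ) (τ : Traj S A H) : ℝ :=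
  d0 (τ.1 ⟨0, hH⟩) * (∏ t : Fin H, sch t (τ.1 t) (τ.2 t)) *
    ∏ t : Fin (H - 1),
      P (τ.1 ⟨t.val, Nat.lt_of_lt_of_le t.isLt (Nat.sub_le H 1)⟩)
        (τ.2 ⟨t.val, Nat.lt_of_lt_of_le t.isLt (Nat.sub_le H 1)⟩)
        (τ.1 ⟨t.val + 1, Nat.lt_of_le_of_lt (Nat.succ_le_of_lt t.isLt)
          (Nat.sub_lt hH Nat.one_pos)⟩)

def genP {S A : Type*} {n : ℕ}
    (d0 : S → ℝ) (P : S → A → S → ℝ) (sch : ℕ → S → A → ℝ) (τ : Traj S A (n+1)) : ℝ :=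
  d0 (τ.1 0) * (∏ t : Fin (n+1), sch t (τ.1 t) (τ.2 t)) *
    ∏ t : Fin n, P (τ.1 t.castSucc) (τ.2 t.castSucc) (τ.1 t.succ)

section Aux
variable {S A : Type*} [Fintype S] [Fintype A]

lemma sum_traj_succ {n : ℕ} (F : Traj S A (n+1) → ℝ) :
    ∑ τ : Traj S A (n+1), F τ =
    ∑ s0 : S, ∑ a0 : A, ∑ τ : Traj S A n, F (Fin.cons s0 τ.1, Fin.cons a0 τ.2) := by
  rw [← Equiv.sum_comp
    (Equiv.prodCongr (Fin.consEquiv (fun _ => S)) (Fin.consEquiv (fun _ => A))) F]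
  simp only [Fintype.sum_prod_type]
  refine Finset.sum_congr rfl fun s0 _ => ?_
  rw [Finset.sum_comm]
  rfl

lemma genP_cons {m : ℕ} (d0 : S → ℝ) (P : S → A → S → ℝ) (sch : ℕ → S → A → ℝ)
    (s0 : S) (a0 : A) (τ : Traj S A (m+1)) :
    genP (n := m+1) d0 P sch (Fin.cons s0 τ.1, Fin.cons a0 τ.2)
      = d0 s0 * sch 0 s0 a0 *
        genP (fun s => P s0 a0 s) P (fun k => sch (k+1)) τ := by
  unfold genP
  simp only [Fin.prod_univ_succ, Fin.cons_zero, Fin.cons_succ, Fin.castSucc_zero,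
    ← Fin.succ_castSucc, Fin.val_succ, Fin.val_zero, Fin.succ_zero_eq_one, Fin.cons_one]
  ring

end Aux

section Aux2
variable {S A : Type*} [Fintype S] [Fintype A]

lemma sum_traj_one (F : Traj S A 1 → ℝ) :
    ∑ τ : Traj S A 1, F τ = ∑ s0 : S, ∑ a0 : A, F (fun _ => s0, fun _ => a0) := by
  rw [sum_traj_succ]
  refine Finset.sum_congr rfl fun s0 _ => Finset.sum_congr rfl fun a0 _ => ?_
  have h1 : ∀ τ : Traj S A 0, ((Fin.cons s0 τ.1, Fin.cons a0 τ.2) : Traj S A 1)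
      = (fun _ => s0, fun _ => a0) := by
    intro τ
    refine Prod.ext ?_ ?_ <;> funext i <;> rw [Subsingleton.elim i 0] <;> rfl
  haveI uS : Unique (Fin 0 → S) := Pi.uniqueOfIsEmpty _
  haveI uA : Unique (Fin 0 → A) := Pi.uniqueOfIsEmpty _
  haveI : Unique (Traj S A 0) :=
    ⟨⟨(default, default)⟩, fun τ => Prod.ext (uS.uniq τ.1) (uA.uniq τ.2)⟩
  simp only [h1]
  rw [Fintype.sum_unique]

lemma sum_genP_norm (P : S → A → S → ℝ) (hP1 : ∀ s a, ∑ s', P s a s' = 1) :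
    ∀ (n : ℕ) (sch : ℕ → S → A → ℝ) (_ : ∀ k s, ∑ a, sch k s a = 1) (d0 : S → ℝ),
    ∑ τ : Traj S A (n+1), genP d0 P sch τ = ∑ s, d0 s := by
  intro n
  induction n with
  | zero =>
    intro sch hsch d0
    rw [sum_traj_one]
    simp only [genP, Fin.prod_univ_succ, Fin.prod_univ_zero, mul_one, Fin.val_zero]
    simp only [← Finset.mul_sum, hsch, mul_one]
  | succ m ih =>
    intro sch hsch d0
    rw [sum_traj_succ]
    simp only [genP_cons]
    have : ∀ s0 a0, ∑ τ : Traj S A (m+1),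
        d0 s0 * sch 0 s0 a0 * genP (fun s => P s0 a0 s) P (fun k => sch (k+1)) τ
        = d0 s0 * sch 0 s0 a0 := by
      intro s0 a0
      rw [← Finset.mul_sum, ih (fun k => sch (k+1)) (fun k s => hsch (k+1) s) _, hP1, mul_one]
    simp only [this]
    simp only [← Finset.mul_sum, hsch, mul_one]
end Aux2

section Aux3
variable {S A : Type*} [Fintype S] [Fintype A]

lemma genP_agree (P : S → A → S → ℝ) (hP1 : ∀ s a, ∑ s', P s a s' = 1) :
    ∀ (n : ℕ) (sch sch' : ℕ → S → A → ℝ)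
      (_ : ∀ k s, ∑ a, sch k s a = 1) (_ : ∀ k s, ∑ a, sch' k s a = 1)
      (d0 : S → ℝ) (t : Fin (n+1)) (_ : ∀ k, k ≤ t.val → sch k = sch' k)
      (f : S → A → ℝ),
    ∑ τ : Traj S A (n+1), genP d0 P sch τ * f (τ.1 t) (τ.2 t)
      = ∑ τ : Traj S A (n+1), genP d0 P sch' τ * f (τ.1 t) (τ.2 t) := by
  intro n
  induction n with
  | zero =>
    intro sch sch' hs hs' d0 t hag f
    rw [sum_traj_one, sum_traj_one]
    have h0 : sch 0 = sch' 0 := hag 0 (Nat.zero_le _)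
    simp only [genP, Fin.prod_univ_succ, Fin.prod_univ_zero, mul_one, Fin.val_zero, h0]
  | succ m ih =>
    intro sch sch' hs hs' d0 t hag f
    have h0 : sch 0 = sch' 0 := hag 0 (Nat.zero_le _)
    induction t using Fin.cases with
    | zero =>
      rw [sum_traj_succ, sum_traj_succ]
      have key : ∀ (sch2 : ℕ → S → A → ℝ), (∀ k s, ∑ a, sch2 k s a = 1) →
          ∀ (s0 : S) (a0 : A),
          (∑ τ : Traj S A (m+1),
            genP (n := m+1) d0 P sch2 (Fin.cons s0 τ.1, Fin.cons a0 τ.2) *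
              f ((Fin.cons s0 τ.1 : Fin (m+2) → S) 0) ((Fin.cons a0 τ.2 : Fin (m+2) → A) 0))
            = d0 s0 * sch2 0 s0 a0 * f s0 a0 := by
        intro sch2 hs2 s0 a0
        simp only [genP_cons, Fin.cons_zero]
        have h2 : (∑ τ : Traj S A (m+1),
            genP (fun s => P s0 a0 s) P (fun k => sch2 (k+1)) τ) = 1 := by
          rw [sum_genP_norm P hP1 m (fun k => sch2 (k+1)) (fun k s => hs2 (k+1) s)
            (fun s => P s0 a0 s), hP1]
        calc (∑ τ : Traj S A (m+1),
              d0 s0 * sch2 0 s0 a0 * genP (fun s => P s0 a0 s) P (fun k => sch2 (k+1)) τ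
                * f s0 a0)
            = d0 s0 * sch2 0 s0 a0 * f s0 a0 *
              ∑ τ : Traj S A (m+1), genP (fun s => P s0 a0 s) P (fun k => sch2 (k+1)) τ := by
              rw [Finset.mul_sum]
              exact Finset.sum_congr rfl fun τ _ => by ring
          _ = d0 s0 * sch2 0 s0 a0 * f s0 a0 := by rw [h2, mul_one]
      refine Finset.sum_congr rfl fun s0 _ => Finset.sum_congr rfl fun a0 _ => ?_
      rw [key sch hs s0 a0, key sch' hs' s0 a0, h0]
    | succ j =>
      rw [sum_traj_succ, sum_traj_succ]
      refine Finset.sum_congr rfl fun s0 _ => Finset.sum_congr rfl fun a0 _ => ?_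
      simp only [genP_cons, Fin.cons_succ]
      have hag' : ∀ k, k ≤ j.val → (fun k => sch (k+1)) k = (fun k => sch' (k+1)) k := by
        intro k hk
        exact hag (k+1) (Nat.succ_le_succ hk)
      have ihj := ih (fun k => sch (k+1)) (fun k => sch' (k+1))
        (fun k s => hs (k+1) s) (fun k s => hs' (k+1) s)
        (fun s => P s0 a0 s) j hag' f
      calc (∑ τ : Traj S A (m+1),
            d0 s0 * sch 0 s0 a0 * genP (fun s => P s0 a0 s) P (fun k => sch (k+1)) τ
              * f (τ.1 j) (τ.2 j))
          = d0 s0 * sch 0 s0 a0 * ∑ τ : Traj S A (m+1),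
              genP (fun s => P s0 a0 s) P (fun k => sch (k+1)) τ * f (τ.1 j) (τ.2 j) := by
            rw [Finset.mul_sum]
            exact Finset.sum_congr rfl fun τ _ => by ring
        _ = d0 s0 * sch' 0 s0 a0 * ∑ τ : Traj S A (m+1),
              genP (fun s => P s0 a0 s) P (fun k => sch' (k+1)) τ * f (τ.1 j) (τ.2 j) := by
            rw [ihj, h0]
        _ = _ := by
            rw [Finset.mul_sum]
            exact Finset.sum_congr rfl fun τ _ => by ring

end Aux3

/-- Unbiasedness of the per-decision importance-sampling estimator in a finite MDP:
`E^{πb}[R̃_PDIS(τ)] = E^{πe}[R(τ)] = V^{πe}`. -/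
theorem pdis_unbiased
    {S A : Type*} [Fintype S] [Fintype A] [DecidableEq S] [DecidableEq A]
    (H : ℕ) (hH : 0 < H)
    (d0 : S → ℝ) (hd00 : ∀ s, 0 ≤ d0 s) (hd01 : ∑ s, d0 s = 1)
    (P : S → A → S → ℝ) (hP0 : ∀ s a s', 0 ≤ P s a s')
    (hP1 : ∀ s a, ∑ s', P s a s' = 1)
    (r : S → A → ℝ) (γ : ℝ)
    (πb πe : S → A → ℝ)
    (hπb0 : ∀ s a, 0 ≤ πb s a) (hπb1 : ∀ s, ∑ a, πb s a = 1)
    (hπe0 : ∀ s a, 0 ≤ πe s a) (hπe1 : ∀ s, ∑ a, πe s a = 1)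
    (hsupp : ∀ s a, 0 < πe s a → 0 < πb s a) :
    ∑ τ : Traj S A H, trajProb hH d0 P πb τ * pdisReturn πb πe r γ τ =
      ∑ τ : Traj S A H, trajProb hH d0 P πe τ *
        ∑ t : Fin H, γ ^ (t : ℕ) * r (τ.1 t) (τ.2 t) := by
  obtain ⟨n, rfl⟩ : ∃ n, H = n + 1 := ⟨H - 1, by omega⟩
  have hba : ∀ s a, πb s a * (πe s a / πb s a) = πe s a := by
    intro s a
    rcases eq_or_ne (πb s a) 0 with h | h
    · have he : πe s a = 0 := by
        by_contra hne
        have hpos := hsupp s a (lt_of_le_of_ne (hπe0 s a) (Ne.symm hne))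
        rw [h] at hpos
        exact lt_irrefl 0 hpos
      rw [h, he]; ring
    · field_simp
  have hbP : ∀ τ : Traj S A (n+1), trajProb hH d0 P πb τ = genP d0 P (fun _ => πb) τ :=
    fun τ => rfl
  have heP : ∀ τ : Traj S A (n+1), trajProb hH d0 P πe τ = genP d0 P (fun _ => πe) τ :=
    fun τ => rfl
  simp only [pdisReturn, Finset.mul_sum]
  rw [Finset.sum_comm]
  conv_rhs => rw [Finset.sum_comm]
  refine Finset.sum_congr rfl fun t _ => ?_
  set sch1 : ℕ → S → A → ℝ := fun k => if k ≤ (t : ℕ) then πe else πb with hsch1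
  have hs1 : ∀ k s, ∑ a, sch1 k s a = 1 := by
    intro k s
    rw [hsch1]
    by_cases hk : k ≤ (t : ℕ)
    · simp only [if_pos hk]; exact hπe1 s
    · simp only [if_neg hk]; exact hπb1 s
  have hse : ∀ (k : ℕ) (s : S), ∑ a, (fun _ : ℕ => πe) k s a = 1 := fun _ s => hπe1 s
  have hag : ∀ k, k ≤ (t : ℕ) → sch1 k = (fun _ => πe) k := by
    intro k hk
    rw [hsch1]
    simp only [if_pos hk]
  have hkey : ∀ τ : Traj S A (n+1),
      trajProb hH d0 P πb τ *
        (γ ^ (t : ℕ) * (∏ k ∈ Finset.univ.filter (fun k : Fin (n+1) => k ≤ t),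
          πe (τ.1 k) (τ.2 k) / πb (τ.1 k) (τ.2 k)) * r (τ.1 t) (τ.2 t))
      = genP d0 P sch1 τ * (γ ^ (t : ℕ) * r (τ.1 t) (τ.2 t)) := by
    intro τ
    have hprod : (∏ k : Fin (n+1), πb (τ.1 k) (τ.2 k)) *
        (∏ k ∈ Finset.univ.filter (fun k : Fin (n+1) => k ≤ t),
          πe (τ.1 k) (τ.2 k) / πb (τ.1 k) (τ.2 k))
        = ∏ k : Fin (n+1), sch1 (k : ℕ) (τ.1 k) (τ.2 k) := by
      rw [← Finset.prod_filter_mul_prod_filter_not Finset.univ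
        (fun k : Fin (n+1) => k ≤ t) (fun k => πb (τ.1 k) (τ.2 k))]
      rw [← Finset.prod_filter_mul_prod_filter_not Finset.univ
        (fun k : Fin (n+1) => k ≤ t) (fun k => sch1 (k : ℕ) (τ.1 k) (τ.2 k))]
      have h1 : (∏ k ∈ Finset.univ.filter (fun k : Fin (n+1) => k ≤ t),
          sch1 (k : ℕ) (τ.1 k) (τ.2 k))
          = ∏ k ∈ Finset.univ.filter (fun k : Fin (n+1) => k ≤ t),
            πe (τ.1 k) (τ.2 k) := by
        refine Finset.prod_congr rfl fun k hk => ?_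
        have hkt : (k : ℕ) ≤ (t : ℕ) := (Finset.mem_filter.mp hk).2
        rw [hsch1]
        simp only [if_pos hkt]
      have h2 : (∏ k ∈ Finset.univ.filter (fun k : Fin (n+1) => ¬ k ≤ t),
          sch1 (k : ℕ) (τ.1 k) (τ.2 k))
          = ∏ k ∈ Finset.univ.filter (fun k : Fin (n+1) => ¬ k ≤ t),
            πb (τ.1 k) (τ.2 k) := by
        refine Finset.prod_congr rfl fun k hk => ?_
        have hkt : ¬ (k : ℕ) ≤ (t : ℕ) := (Finset.mem_filter.mp hk).2
        rw [hsch1]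
        simp only [if_neg hkt]
      rw [h1, h2]
      calc (∏ k ∈ Finset.univ.filter (fun k : Fin (n+1) => k ≤ t), πb (τ.1 k) (τ.2 k)) *
            (∏ k ∈ Finset.univ.filter (fun k : Fin (n+1) => ¬ k ≤ t), πb (τ.1 k) (τ.2 k)) *
            ∏ k ∈ Finset.univ.filter (fun k : Fin (n+1) => k ≤ t),
              πe (τ.1 k) (τ.2 k) / πb (τ.1 k) (τ.2 k)
          = ((∏ k ∈ Finset.univ.filter (fun k : Fin (n+1) => k ≤ t), πb (τ.1 k) (τ.2 k)) *
            ∏ k ∈ Finset.univ.filter (fun k : Fin (n+1) => k ≤ t),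
              πe (τ.1 k) (τ.2 k) / πb (τ.1 k) (τ.2 k)) *
            ∏ k ∈ Finset.univ.filter (fun k : Fin (n+1) => ¬ k ≤ t), πb (τ.1 k) (τ.2 k) := by
            ring
        _ = (∏ k ∈ Finset.univ.filter (fun k : Fin (n+1) => k ≤ t), πe (τ.1 k) (τ.2 k)) *
            ∏ k ∈ Finset.univ.filter (fun k : Fin (n+1) => ¬ k ≤ t), πb (τ.1 k) (τ.2 k) := by
            rw [← Finset.prod_mul_distrib]
            exact congrArg (· * _) (Finset.prod_congr rfl fun k _ => hba _ _)
    rw [hbP τ]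
    unfold genP
    calc d0 (τ.1 0) * (∏ k : Fin (n+1), πb (τ.1 k) (τ.2 k)) *
          (∏ k : Fin n, P (τ.1 k.castSucc) (τ.2 k.castSucc) (τ.1 k.succ)) *
          (γ ^ (t : ℕ) * (∏ k ∈ Finset.univ.filter (fun k : Fin (n+1) => k ≤ t),
            πe (τ.1 k) (τ.2 k) / πb (τ.1 k) (τ.2 k)) * r (τ.1 t) (τ.2 t))
        = d0 (τ.1 0) * ((∏ k : Fin (n+1), πb (τ.1 k) (τ.2 k)) *
            (∏ k ∈ Finset.univ.filter (fun k : Fin (n+1) => k ≤ t),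
              πe (τ.1 k) (τ.2 k) / πb (τ.1 k) (τ.2 k))) *
          (∏ k : Fin n, P (τ.1 k.castSucc) (τ.2 k.castSucc) (τ.1 k.succ)) *
          (γ ^ (t : ℕ) * r (τ.1 t) (τ.2 t)) := by ring
      _ = _ := by rw [hprod]
  calc ∑ τ : Traj S A (n+1), trajProb hH d0 P πb τ *
        (γ ^ (t : ℕ) * (∏ k ∈ Finset.univ.filter (fun k : Fin (n+1) => k ≤ t),
          πe (τ.1 k) (τ.2 k) / πb (τ.1 k) (τ.2 k)) * r (τ.1 t) (τ.2 t))
      = ∑ τ : Traj S A (n+1), genP d0 P sch1 τ *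
          (fun s a => γ ^ (t : ℕ) * r s a) (τ.1 t) (τ.2 t) :=
        Finset.sum_congr rfl fun τ _ => hkey τ
    _ = ∑ τ : Traj S A (n+1), genP d0 P (fun _ => πe) τ *
          (fun s a => γ ^ (t : ℕ) * r s a) (τ.1 t) (τ.2 t) :=
        genP_agree P hP1 n sch1 (fun _ => πe) hs1 hse d0 t hag (fun s a => γ ^ (t : ℕ) * r s a)
    _ = ∑ τ : Traj S A (n+1), trajProb hH d0 P πe τ * (γ ^ (t : ℕ) * r (τ.1 t) (τ.2 t)) :=
        Finset.sum_congr rfl fun τ _ => by rw [heP τ]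
end

section
/- Let S and A be finite types, H ≥ 1 a horizon, d₀ an initial state distribution on S, r : S × A → ℝ a reward, γ a discount, and let P and P̂ be two families of transition probability mass functions on S × A (the true dynamics and the generative-model dynamics). Let π_b, π_e be policies with common support (π_e(a|s) > 0 implies π_b(a|s) > 0). Write p^{π} for the trajectory distribution under dynamics P and policy π, p̂^{π} for the trajectory distribution under dynamics P̂ and policy π, p̂^{π}(·|s₀ = s) for the model trajectory distribution started at state s, R(τ) = ∑_{t=1}^H γ^{t−1} r(s_t, a_t), and ρ(τ) = ∏_{t=1}^H π_e(a_t|s_t)/π_b(a_t|s_t). Then the population DR-PPI estimand is exactly the target value: E_{τ̂∼p̂^{π_e}}[R(τ̂)] + ( E_{τ∼p^{π_b}}[ρ(τ)R(τ)] − ∑_{s∈S} d₀(s)·E_{τ̂∼p̂^{π_e}(·|s₀=s)}[R(τ̂)] ) = V^{π_e}, where V^{π_e} = E_{τ∼p^{π_e}}[R(τ)]. -/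
/-- The discounted return `R(τ) = ∑_{t=1}^H γ^{t−1} r(s_t, a_t)` of a trajectory. -/
def trajReturn {S A : Type*} {H : ℕ} (r : S → A → ℝ) (γ : ℝ) (τ : Traj S A H) : ℝ :=
  ∑ t : Fin H, γ ^ (t : ℕ) * r (τ.1 t) (τ.2 t)

/-- The trajectory importance ratio `ρ(τ) = ∏_{t=1}^H πe(a_t|s_t)/πb(a_t|s_t)`. -/
noncomputable def impRatio {S A : Type*} {H : ℕ}
    (πb πe : S → A → ℝ) (τ : Traj S A H) : ℝ :=
  ∏ t : Fin H, πe (τ.1 t) (τ.2 t) / πb (τ.1 t) (τ.2 t)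

/-- Population-level unbiasedness of the DR-PPI estimand: for any model dynamics `P̂`,
the model-based value under the target policy, plus the IS estimate under the true
dynamics and behavior policy, minus the initial-state-averaged model-based value,
equals the true target value `V^{πe}`. -/
theorem dr_ppi_population_identity
    {S A : Type*} [Fintype S] [Fintype A] [DecidableEq S] [DecidableEq A]
    (H : ℕ) (hH : 0 < H)
    (d0 : S → ℝ) (hd00 : ∀ s, 0 ≤ d0 s) (hd01 : ∑ s, d0 s = 1)
    (P Phat : S → A → S → ℝ)
    (hP0 : ∀ s a s', 0 ≤ P s a s') (hP1 : ∀ s a, ∑ s', P s a s' = 1)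
    (hPhat0 : ∀ s a s', 0 ≤ Phat s a s') (hPhat1 : ∀ s a, ∑ s', Phat s a s' = 1)
    (r : S → A → ℝ) (γ : ℝ)
    (πb πe : S → A → ℝ)
    (hπb0 : ∀ s a, 0 ≤ πb s a) (hπb1 : ∀ s, ∑ a, πb s a = 1)
    (hπe0 : ∀ s a, 0 ≤ πe s a) (hπe1 : ∀ s, ∑ a, πe s a = 1)
    (hsupp : ∀ s a, 0 < πe s a → 0 < πb s a) :
    (∑ τ : Traj S A H, trajProb hH d0 Phat πe τ * trajReturn r γ τ)
      + ((∑ τ : Traj S A H,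
            trajProb hH d0 P πb τ * impRatio πb πe τ * trajReturn r γ τ)
        - ∑ s : S, d0 s *
            ∑ τ : Traj S A H,
              trajProb hH (fun s' => if s' = s then 1 else 0) Phat πe τ *
                trajReturn r γ τ) =
      ∑ τ : Traj S A H, trajProb hH d0 P πe τ * trajReturn r γ τ := by
  have h1 : ∀ τ : Traj S A H,
      trajProb hH d0 P πb τ * impRatio πb πe τ = trajProb hH d0 P πe τ := by
    intro τ
    unfold trajProb impRatio
    have hprod : (∏ t : Fin H, πb (τ.1 t) (τ.2 t)) *
        (∏ t : Fin H, πe (τ.1 t) (τ.2 t) / πb (τ.1 t) (τ.2 t))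
        = ∏ t : Fin H, πe (τ.1 t) (τ.2 t) := by
      rw [← Finset.prod_mul_distrib]
      refine Finset.prod_congr rfl fun t _ => ?_
      by_cases h : πb (τ.1 t) (τ.2 t) = 0
      · have he : πe (τ.1 t) (τ.2 t) = 0 := by
          by_contra hne
          exact absurd h
            (ne_of_gt (hsupp _ _ (lt_of_le_of_ne (hπe0 _ _) (Ne.symm hne))))
        rw [h, he]; ring
      · field_simp
    set c := ∏ t : Fin (H - 1),
      P (τ.1 ⟨t.val, Nat.lt_of_lt_of_le t.isLt (Nat.sub_le H 1)⟩)
        (τ.2 ⟨t.val, Nat.lt_of_lt_of_le t.isLt (Nat.sub_le H 1)⟩)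
        (τ.1 ⟨t.val + 1, Nat.lt_of_le_of_lt (Nat.succ_le_of_lt t.isLt)
          (Nat.sub_lt hH Nat.one_pos)⟩) with hc
    linear_combination (d0 (τ.1 ⟨0, hH⟩) * c) * hprod
  have h2 : ∑ s : S, d0 s *
      ∑ τ : Traj S A H,
        trajProb hH (fun s' => if s' = s then 1 else 0) Phat πe τ *
          trajReturn r γ τ
      = ∑ τ : Traj S A H, trajProb hH d0 Phat πe τ * trajReturn r γ τ := by
    simp_rw [Finset.mul_sum]
    rw [Finset.sum_comm]
    refine Finset.sum_congr rfl fun τ _ => ?_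
    unfold trajProb
    rw [Finset.sum_eq_single (τ.1 ⟨0, hH⟩)]
    · simp; ring
    · intro s _ hs
      simp [Ne.symm hs]
    · simp
  rw [h2]
  have h3 : (∑ τ : Traj S A H,
      trajProb hH d0 P πb τ * impRatio πb πe τ * trajReturn r γ τ)
      = ∑ τ : Traj S A H, trajProb hH d0 P πe τ * trajReturn r γ τ := by
    refine Finset.sum_congr rfl fun τ _ => ?_
    rw [h1]
  rw [h3]; ring
end

section
/- Let W be a real random variable with c ≤ W ≤ C for constants 0 < c ≤ C, and let R be a real random variable with |R| ≤ C_r, with E[W] = 1 and E[W·R] = V. Let (W_1, R_1), …, (W_n, R_n) be i.i.d. copies of (W, R) and define the weighted importance-sampling estimator Ŵ_n = (∑_{i=1}^n W_i R_i)/(∑_{j=1}^n W_j). Then there exists a constant K, depending only on c, C and C_r, such that for all n ≥ 1, |E[Ŵ_n] − V| ≤ K/n. -/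
open MeasureTheory ProbabilityTheory

/-!
Expand `1 / S` to second order around `n`, where `S = ∑ Wⱼ` has mean `n` and `T = ∑ Wᵢ Rᵢ`:
`T / S = T / n + T (n - S) / n² + T (n - S)² / (n² S)`. The first term has mean `V`. Since
`n - S = ∑ (1 - Wⱼ)` is a sum of centred variables, independence kills the off-diagonal terms of
`E[T (n - S)]` and of `E[(n - S)²]`, so both are `O(n)`; as `S ≥ n c`, the last two terms
contribute `O(1 / n)`.
-/

open Finset

section Decorrelation

variable {Ω ι : Type*} [MeasurableSpace Ω] {μ : Measure Ω}

theorem integral_sum_mul_sum_eq_sum_integral_mul (s : Finset ι) {f g : ι → Ω → ℝ}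
    (hf : ∀ i, MemLp (f i) 2 μ) (hg : ∀ j, MemLp (g j) 2 μ)
    (hfg : ∀ i j, i ≠ j → IndepFun (f i) (g j) μ) (hg0 : ∀ j, ∫ ω, g j ω ∂μ = 0) :
    ∫ ω, (∑ i ∈ s, f i ω) * ∑ j ∈ s, g j ω ∂μ = ∑ i ∈ s, ∫ ω, f i ω * g i ω ∂μ := by
  have hint : ∀ i j, Integrable (fun ω => f i ω * g j ω) μ := fun i j =>
    (hf i).integrable_mul (hg j)
  have hoff : ∀ i j, i ≠ j → ∫ ω, f i ω * g j ω ∂μ = 0 := fun i j hij => by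
    rw [(hfg i j hij).integral_fun_mul_eq_mul_integral (hf i).1 (hg j).1, hg0, mul_zero]
  simp_rw [sum_mul_sum]
  rw [integral_finsetSum _ fun i _ => integrable_finsetSum _ fun j _ => hint i j]
  refine sum_congr rfl fun i hi => ?_
  rw [integral_finsetSum _ fun j _ => hint i j,
    sum_eq_single_of_mem i hi fun j _ hji => hoff i j hji.symm]

theorem abs_integral_sum_mul_sum_le [IsProbabilityMeasure μ] (s : Finset ι) {f g : ι → Ω → ℝ}
    {A B : ℝ} (hfm : ∀ i, Measurable (f i)) (hgm : ∀ j, Measurable (g j))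
    (hfA : ∀ i ω, |f i ω| ≤ A) (hgB : ∀ j ω, |g j ω| ≤ B)
    (hfg : ∀ i j, i ≠ j → IndepFun (f i) (g j) μ) (hg0 : ∀ j, ∫ ω, g j ω ∂μ = 0) :
    |∫ ω, (∑ i ∈ s, f i ω) * ∑ j ∈ s, g j ω ∂μ| ≤ #s * (A * B) := by
  have hfL : ∀ i, MemLp (f i) 2 μ := fun i =>
    .of_bound (hfm i).aestronglyMeasurable A (ae_of_all _ (hfA i))
  have hgL : ∀ j, MemLp (g j) 2 μ := fun j =>
    .of_bound (hgm j).aestronglyMeasurable B (ae_of_all _ (hgB j))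
  have hdiag : ∀ i, |∫ ω, f i ω * g i ω ∂μ| ≤ A * B := fun i => by
    have hbound : ∀ ω, ‖f i ω * g i ω‖ ≤ A * B := fun ω => by
      rw [Real.norm_eq_abs, abs_mul]
      exact mul_le_mul (hfA i ω) (hgB i ω) (abs_nonneg _) ((abs_nonneg _).trans (hfA i ω))
    simpa using norm_integral_le_of_norm_le_const (μ := μ) (ae_of_all _ hbound)
  rw [integral_sum_mul_sum_eq_sum_integral_mul s hfL hgL hfg hg0]
  calc |∑ i ∈ s, ∫ ω, f i ω * g i ω ∂μ| ≤ ∑ i ∈ s, |∫ ω, f i ω * g i ω ∂μ| :=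
        abs_sum_le_sum_abs _ _
    _ ≤ #s * (A * B) := by simpa using sum_le_sum fun i _ => hdiag i

end Decorrelation

theorem div_eq_second_order_expansion {t s n : ℝ} (hs : s ≠ 0) (hn : n ≠ 0) :
    t / s = t / n + t * (n - s) / n ^ 2 + t * (n - s) ^ 2 / (n ^ 2 * s) := by
  field_simp
  ring

theorem abs_mul_sq_div_le {t s d n c M : ℝ} (hn : 0 < n) (hc : 0 < c) (hs : n * c ≤ s)
    (ht : |t| ≤ n * M) : |t * d ^ 2 / (n ^ 2 * s)| ≤ M / (n ^ 2 * c) * d ^ 2 := by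
  have hs' : 0 < s := (mul_pos hn hc).trans_le hs
  rw [abs_div, abs_mul, abs_of_nonneg (sq_nonneg d),
    abs_of_pos (by positivity : (0 : ℝ) < n ^ 2 * s)]
  calc |t| * d ^ 2 / (n ^ 2 * s) ≤ n * M * d ^ 2 / (n ^ 2 * (n * c)) :=
        div_le_div₀ (mul_nonneg ((abs_nonneg t).trans ht) (sq_nonneg d)) (by gcongr)
          (by positivity) (by gcongr)
    _ = M / (n ^ 2 * c) * d ^ 2 := by field_simp

section Bias

variable {Ω : Type*} [MeasurableSpace Ω] {P : Measure Ω}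

theorem abs_integral_div_sub_le [IsFiniteMeasure P] {T S : Ω → ℝ} {n c M V A B : ℝ}
    (hn : 0 < n) (hc : 0 < c) (hM : 0 ≤ M) (hTm : Measurable T) (hSL : MemLp S 2 P)
    (hS : ∀ ω, n * c ≤ S ω) (hT : ∀ ω, |T ω| ≤ n * M) (hET : ∫ ω, T ω ∂P = n * V)
    (hTD : |∫ ω, T ω * (n - S ω) ∂P| ≤ A) (hDD : ∫ ω, (n - S ω) ^ 2 ∂P ≤ B) :
    |∫ ω, T ω / S ω ∂P - V| ≤ A / n ^ 2 + M / (n ^ 2 * c) * B := by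
  have hDL : MemLp (fun ω => n - S ω) 2 P := (memLp_const n).sub hSL
  have hTint : Integrable T P := .of_bound hTm.aestronglyMeasurable _ (ae_of_all _ hT)
  have hTDint : Integrable (fun ω => T ω * (n - S ω)) P :=
    (hDL.integrable one_le_two).bdd_mul hTm.aestronglyMeasurable (ae_of_all _ hT)
  have hD2int : Integrable (fun ω => (n - S ω) ^ 2) P := hDL.integrable_sq
  have hrem : ∀ ω, ‖T ω * (n - S ω) ^ 2 / (n ^ 2 * S ω)‖ ≤ M / (n ^ 2 * c) * (n - S ω) ^ 2 :=
    fun ω => abs_mul_sq_div_le hn hc (hS ω) (hT ω)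
  have hremint : Integrable (fun ω => T ω * (n - S ω) ^ 2 / (n ^ 2 * S ω)) P :=
    have hSm : AEMeasurable S P := hSL.1.aemeasurable
    (hD2int.const_mul _).mono' (AEMeasurable.aestronglyMeasurable (by fun_prop))
      (ae_of_all _ hrem)
  have hlinint : Integrable (fun ω => T ω / n + T ω * (n - S ω) / n ^ 2) P :=
    (hTint.div_const _).add (hTDint.div_const _)
  have hexpand : ∀ ω, T ω / S ω
      = T ω / n + T ω * (n - S ω) / n ^ 2 + T ω * (n - S ω) ^ 2 / (n ^ 2 * S ω) := fun ω =>
    div_eq_second_order_expansion ((mul_pos hn hc).trans_le (hS ω)).ne' hn.ne'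
  calc |∫ ω, T ω / S ω ∂P - V|
      = |(∫ ω, T ω * (n - S ω) ∂P) / n ^ 2 + ∫ ω, T ω * (n - S ω) ^ 2 / (n ^ 2 * S ω) ∂P| := by
        rw [integral_congr_ae (ae_of_all _ hexpand), integral_add hlinint hremint,
          integral_add (hTint.div_const _) (hTDint.div_const _), integral_div, integral_div, hET,
          mul_div_cancel_left₀ _ hn.ne']
        congr 1
        ring
    _ ≤ |∫ ω, T ω * (n - S ω) ∂P| / n ^ 2 + ∫ ω, M / (n ^ 2 * c) * (n - S ω) ^ 2 ∂P := by
        refine (abs_add_le _ _).trans (add_le_add ?_ ?_)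
        · rw [abs_div, abs_of_pos (by positivity : 0 < n ^ 2)]
        · exact norm_integral_le_of_norm_le (hD2int.const_mul _) (ae_of_all _ hrem)
    _ ≤ A / n ^ 2 + M / (n ^ 2 * c) * B := by
        rw [integral_const_mul]
        gcongr

variable [IsProbabilityMeasure P] {W Y : ℕ → Ω → ℝ} {c C M V : ℝ}

theorem abs_integral_sum_div_sum_sub_le (hc : 0 < c) (hWm : ∀ i, Measurable (W i))
    (hYm : ∀ i, Measurable (Y i)) (hW : ∀ i ω, c ≤ W i ω ∧ W i ω ≤ C)
    (hY : ∀ i ω, |Y i ω| ≤ M) (hW1 : ∀ i, ∫ ω, W i ω ∂P = 1) (hYV : ∀ i, ∫ ω, Y i ω ∂P = V)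
    (hYW : ∀ i j, i ≠ j → IndepFun (Y i) (W j) P)
    (hWW : ∀ i j, i ≠ j → IndepFun (W i) (W j) P) {n : ℕ} (hn : 0 < n) :
    |∫ ω, (∑ i ∈ range n, Y i ω) / (∑ j ∈ range n, W j ω) ∂P - V|
      ≤ (M * (1 + C) + M * (1 + C) ^ 2 / c) / n := by
  have hn' : (0 : ℝ) < n := by exact_mod_cast hn
  obtain ⟨ω₀⟩ := nonempty_of_isProbabilityMeasure P
  have hM : 0 ≤ M := (abs_nonneg _).trans (hY 0 ω₀)
  have hWL : ∀ j, MemLp (W j) 2 P := fun j =>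
    .of_bound (hWm j).aestronglyMeasurable C
      (ae_of_all _ fun ω => abs_le.2 ⟨by linarith [hW j ω], (hW j ω).2⟩)
  have h1W : ∀ j ω, |1 - W j ω| ≤ 1 + C := fun j ω => by
    obtain ⟨hcW, hWC⟩ := hW j ω
    rw [abs_le]
    constructor <;> linarith
  have h1Wm : ∀ j, Measurable fun ω => 1 - W j ω := fun j => measurable_const.sub (hWm j)
  have h1W0 : ∀ j, ∫ ω, 1 - W j ω ∂P = 0 := fun j => by
    rw [integral_sub (integrable_const 1) ((hWL j).integrable one_le_two), hW1]
    simp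
  have hsum1W : ∀ ω, ∑ j ∈ range n, (1 - W j ω) = n - ∑ j ∈ range n, W j ω := fun ω => by
    simp [sum_sub_distrib]
  have hTD := abs_integral_sum_mul_sum_le (range n) hYm h1Wm hY h1W
    (fun i j hij => (hYW i j hij).comp measurable_id (measurable_const.sub measurable_id)) h1W0
  have hDD := (le_abs_self _).trans (abs_integral_sum_mul_sum_le (range n) h1Wm h1Wm h1W h1W
    (fun i j hij => (hWW i j hij).comp (measurable_const.sub measurable_id)
      (measurable_const.sub measurable_id)) h1W0)
  simp only [hsum1W, card_range, ← sq] at hTD hDD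
  refine (abs_integral_div_sub_le hn' hc hM (measurable_sum _ fun i _ => hYm i)
    (memLp_finsetSum _ fun j _ => hWL j) (fun ω => ?_) (fun ω => ?_) ?_ hTD hDD).trans_eq ?_
  · simpa using card_nsmul_le_sum (range n) (W · ω) c fun j _ => (hW j ω).1
  · simpa only [card_range, nsmul_eq_mul] using (abs_sum_le_sum_abs _ _).trans
      (sum_le_card_nsmul (range n) _ M fun i _ => hY i ω)
  · rw [integral_finsetSum _ fun i _ => .of_bound (hYm i).aestronglyMeasurable M
      (ae_of_all _ (hY i))]
    simp [hYV]
  · field_simp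

end Bias

theorem wis_bias_bound_general (c C Cr : ℝ) (hc : 0 < c) :
    ∃ K : ℝ, ∀ (Ω : Type) (_ : MeasurableSpace Ω) (P : Measure Ω),
      IsProbabilityMeasure P →
      ∀ (W R : ℕ → Ω → ℝ) (V : ℝ),
        (∀ i, Measurable (W i)) → (∀ i, Measurable (R i)) →
        (∀ i ω, c ≤ W i ω ∧ W i ω ≤ C) →
        (∀ i ω, |R i ω| ≤ Cr) →
        (∀ i, ∫ ω, W i ω ∂P = 1) →
        (∀ i, ∫ ω, W i ω * R i ω ∂P = V) →
        iIndepFun (fun i ω => (W i ω, R i ω)) P →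
        (∀ i, IdentDistrib (fun ω => (W i ω, R i ω)) (fun ω => (W 0 ω, R 0 ω)) P P) →
        ∀ n : ℕ, 1 ≤ n →
          |(∫ ω, (∑ i ∈ Finset.range n, W i ω * R i ω) /
              (∑ j ∈ Finset.range n, W j ω) ∂P) - V| ≤ K / n := by
  refine ⟨C * Cr * (1 + C) + C * Cr * (1 + C) ^ 2 / c, ?_⟩
  intro Ω _ P _ W R V hWm hRm hW hR hW1 hWR hindep _ n hn
  have hWR_le : ∀ i ω, |W i ω * R i ω| ≤ C * Cr := fun i ω => by
    have hWpos : 0 < W i ω := hc.trans_le (hW i ω).1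
    rw [abs_mul, abs_of_pos hWpos]
    exact mul_le_mul (hW i ω).2 (hR i ω) (abs_nonneg _) (hWpos.le.trans (hW i ω).2)
  exact abs_integral_sum_div_sum_sub_le hc hWm (fun i => (hWm i).mul (hRm i)) hW hWR_le hW1 hWR
    (fun i j hij => (hindep.indepFun hij).comp (measurable_fst.mul measurable_snd) measurable_fst)
    (fun i j hij => (hindep.indepFun hij).comp measurable_fst measurable_fst) hn

/-- `O(1/n)` bias of the weighted importance-sampling estimator: for i.i.d. pairs
`(Wᵢ, Rᵢ)` with `c ≤ Wᵢ ≤ C`, `|Rᵢ| ≤ Cr`, `E[Wᵢ] = 1` and `E[Wᵢ Rᵢ] = V`, there is a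
constant `K` depending only on `c, C, Cr` such that
`|E[(∑ Wᵢ Rᵢ)/(∑ Wⱼ)] − V| ≤ K / n` for all `n ≥ 1`. -/
theorem wis_bias_bound (c C Cr : ℝ) (hc : 0 < c) (hcC : c ≤ C) (hCr : 0 ≤ Cr) :
    ∃ K : ℝ, ∀ (Ω : Type) (_ : MeasurableSpace Ω) (P : Measure Ω),
      IsProbabilityMeasure P →
      ∀ (W R : ℕ → Ω → ℝ) (V : ℝ),
        (∀ i, Measurable (W i)) → (∀ i, Measurable (R i)) →
        (∀ i ω, c ≤ W i ω ∧ W i ω ≤ C) →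
        (∀ i ω, |R i ω| ≤ Cr) →
        (∀ i, ∫ ω, W i ω ∂P = 1) →
        (∀ i, ∫ ω, W i ω * R i ω ∂P = V) →
        iIndepFun (fun i ω => (W i ω, R i ω)) P →
        (∀ i, IdentDistrib (fun ω => (W i ω, R i ω)) (fun ω => (W 0 ω, R 0 ω)) P P) →
        ∀ n : ℕ, 1 ≤ n →
          |(∫ ω, (∑ i ∈ Finset.range n, W i ω * R i ω) /
              (∑ j ∈ Finset.range n, W j ω) ∂P) - V| ≤ K / n :=
  wis_bias_bound_general c C Cr hc
end
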